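/- arXiv:2011.05395 — 6 statements merged into one kernel-verified Lean document; each statement's English description precedes it below -/
import Mathlib

section
/- For a complex number E with |E| < 1, a k-th root F of E (so F^k = E), the k-th roots of unity ζ_j = exp(2πij/k) for j = 0,...,k-1, and a_j = 1 - ζ_j·F, and nonnegative integers n, r with 0 ≤ r ≤ k-1, the series identity holds: ∑_{q=0}^∞ C(n + r + k·q, n) · E^q = k^{-1} · F^{-r} · ∑_{j=0}^{k-1} ζ_j^{-r} · a_j^{-(n+1)}, where C(·,·) denotes the binomial coefficient. -/
/-!
Expanding `a_j^{-(n+1)} = (1 - ζ_j F)^{-(n+1)} = ∑_m C(m+n, n) ζ_j^m F^m` and averaging against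
`ζ_j^{-r}` over the `k`-th roots of unity keeps exactly the terms with `m ≡ r (mod k)`, each
multiplied by `k`. Writing `m = r + k q` gives `F^m = F^r E^q`.
-/

open Complex Finset

theorem Nat.exists_add_mul_eq_of_intCast_dvd_sub {k r m : ℕ} (hr : r < k)
    (h : (k : ℤ) ∣ (m : ℤ) - r) : ∃ q, r + k * q = m := by
  have hmod : r % k = m % k := Nat.modEq_iff_dvd.mpr h
  rw [Nat.mod_eq_of_lt hr] at hmod
  exact ⟨m / k, by rw [hmod, Nat.mod_add_div]⟩

namespace IsPrimitiveRoot

variable {K : Type*} [Field K] {ω : K} {k : ℕ}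

theorem sum_pow_zpow_eq_ite (hω : IsPrimitiveRoot ω k) (t : ℤ) :
    ∑ j ∈ range k, (ω ^ j) ^ t = if (k : ℤ) ∣ t then (k : K) else 0 := by
  simp_rw [← zpow_natCast, ← zpow_mul, mul_comm _ t, zpow_mul, zpow_natCast]
  split_ifs with hkt
  · simp [(hω.zpow_eq_one_iff_dvd t).mpr hkt]
  · rw [geom_sum_eq ((hω.zpow_eq_one_iff_dvd t).not.mpr hkt), ← zpow_natCast, ← zpow_mul,
      mul_comm, zpow_mul, hω.zpow_eq_one, one_zpow, sub_self, zero_div]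

theorem hasSum_comp_add_mul [TopologicalSpace K] [IsTopologicalRing K] [NeZero k]
    (hω : IsPrimitiveRoot ω k) {f s : ℕ → K} (hs : ∀ j, HasSum (fun m ↦ f m * (ω ^ j) ^ m) (s j))
    {r : ℕ} (hr : r < k) :
    HasSum (fun q ↦ f (r + k * q)) ((k : K)⁻¹ * ∑ j ∈ range k, (ω ^ j) ^ (-(r : ℤ)) * s j) := by
  have hω0 : ω ≠ 0 := hω.ne_zero (NeZero.ne k)
  have hk : (k : K) ≠ 0 := (hω.neZero').ne
  have hfilter : HasSum (fun m : ℕ ↦ f m * if (k : ℤ) ∣ (m : ℤ) - r then (k : K) else 0)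
      (∑ j ∈ range k, (ω ^ j) ^ (-(r : ℤ)) * s j) := by
    refine (hasSum_sum fun j _ ↦ (hs j).mul_left ((ω ^ j) ^ (-(r : ℤ)))).congr_fun fun m ↦ ?_
    rw [← hω.sum_pow_zpow_eq_ite, mul_sum]
    refine sum_congr rfl fun j _ ↦ ?_
    rw [sub_eq_neg_add, zpow_add₀ (pow_ne_zero j hω0), zpow_natCast]
    ring
  have hinj : Function.Injective (fun q : ℕ ↦ r + k * q) := fun x y h ↦
    Nat.eq_of_mul_eq_mul_left (Nat.pos_of_neZero k) (Nat.add_left_cancel h)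
  have hvanish : ∀ m ∉ Set.range (fun q : ℕ ↦ r + k * q),
      (f m * if (k : ℤ) ∣ (m : ℤ) - r then (k : K) else 0) = 0 := fun m hm ↦ by
    rw [if_neg fun h ↦ hm (Nat.exists_add_mul_eq_of_intCast_dvd_sub hr h), mul_zero]
  have hsub := (hinj.hasSum_iff hvanish).mpr hfilter
  rw [← hasSum_mul_right_iff hk, mul_comm _ (k : K), mul_inv_cancel_left₀ hk]
  convert hsub using 2 with q
  simp

end IsPrimitiveRoot

theorem Complex.exp_two_pi_I_mul_div_eq_pow (k j : ℕ) :
    exp (2 * Real.pi * I * j / k) = exp (2 * Real.pi * I / k) ^ j := by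
  rw [← exp_nat_mul]
  ring_nf

theorem statement0_general (k : ℕ) (hk : 1 ≤ k) (E F : ℂ)
    (hFk : F ^ k = E) (hF : ‖F‖ < 1) (hF0 : F ≠ 0)
    (ζ a : ℕ → ℂ)
    (hζ : ∀ j, ζ j = Complex.exp (2 * Real.pi * Complex.I * j / k))
    (ha : ∀ j, a j = 1 - ζ j * F)
    (n r : ℕ) (hr : r ≤ k - 1) :
    ∑' q : ℕ, ((n + r + k * q).choose n : ℂ) * E ^ q
      = (k : ℂ)⁻¹ * F ^ (-(r : ℤ)) *
        ∑ j ∈ Finset.range k, ζ j ^ (-(r : ℤ)) * a j ^ (-((n : ℤ) + 1)) := by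
  have : NeZero k := ⟨by omega⟩
  set ω := exp (2 * Real.pi * I / k)
  have hω : IsPrimitiveRoot ω k := isPrimitiveRoot_exp k (NeZero.ne k)
  have hζω : ∀ j, ζ j = ω ^ j := fun j ↦ (hζ j).trans (exp_two_pi_I_mul_div_eq_pow k j)
  have hbinom : ∀ j, HasSum (fun m ↦ ((m + n).choose n * F ^ m : ℂ) * (ω ^ j) ^ m)
      (a j ^ (-((n : ℤ) + 1))) := fun j ↦ by
    have hlt : ‖ω ^ j * F‖ < 1 := by
      rwa [norm_mul, norm_pow, hω.norm'_eq_one (NeZero.ne k), one_pow, one_mul]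
    rw [ha, hζω, show -((n : ℤ) + 1) = -((n + 1 : ℕ) : ℤ) by push_cast; ring, zpow_neg,
      zpow_natCast, ← one_div]
    exact (hasSum_choose_mul_geometric_of_norm_lt_one n hlt).congr_fun fun m ↦ by ring
  have hsection := hω.hasSum_comp_add_mul hbinom (r := r) (by omega)
  have hsum : HasSum (fun q ↦ ((n + r + k * q).choose n : ℂ) * E ^ q)
      ((k : ℂ)⁻¹ * F ^ (-(r : ℤ)) *
        ∑ j ∈ Finset.range k, ζ j ^ (-(r : ℤ)) * a j ^ (-((n : ℤ) + 1))) := by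
    rw [← hasSum_mul_left_iff (pow_ne_zero r hF0)]
    convert hsection using 1
    · funext q
      rw [pow_add, pow_mul, hFk, show r + k * q + n = n + r + k * q by ring]
      ring
    · simp_rw [hζω]
      rw [zpow_neg, zpow_natCast]
      field_simp
  exact hsum.tsum_eq

/-- For `|E| < 1`, a k-th root `F` of `E`, the k-th roots of unity
`ζ j = exp(2πij/k)` and `a j = 1 - ζ j * F`, and `0 ≤ r ≤ k-1`:
`∑_q C(n+r+kq, n) E^q = k⁻¹ F^{-r} ∑_{j<k} ζ_j^{-r} a_j^{-(n+1)}`. -/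
theorem statement0 (k : ℕ) (hk : 1 ≤ k) (E F : ℂ) (hE : ‖E‖ < 1)
    (hFk : F ^ k = E) (hF : ‖F‖ < 1) (hF0 : F ≠ 0)
    (ζ a : ℕ → ℂ)
    (hζ : ∀ j, ζ j = Complex.exp (2 * Real.pi * Complex.I * j / k))
    (ha : ∀ j, a j = 1 - ζ j * F)
    (n r : ℕ) (hr : r ≤ k - 1) :
    ∑' q : ℕ, ((n + r + k * q).choose n : ℂ) * E ^ q
      = (k : ℂ)⁻¹ * F ^ (-(r : ℤ)) *
        ∑ j ∈ Finset.range k, ζ j ^ (-(r : ℤ)) * a j ^ (-((n : ℤ) + 1)) :=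
  statement0_general k hk E F hFk hF hF0 ζ a hζ ha n r hr
end

section
/- For a complex number E with |E| < 1, a k-th root F of E, ζ_j = exp(2πij/k), a_j = 1 - ζ_j·F, and nonnegative integers n, r with 0 ≤ r ≤ k-1, one has ∑_{q=0}^∞ C(n + r + k·q, n) · E^q · q = k^{-2} · F^{-r} · ( -r · ∑_{j=0}^{k-1} ζ_j^{-r} · a_j^{-(n+1)} + F·(n+1) · ∑_{j=0}^{k-1} ζ_j^{-r+1} · a_j^{-(n+2)} ). -/
/-!
Expand each `a_j ^ (-(n+1))` and `a_j ^ (-(n+2))` as a negative binomial series in `ζ_j F`. The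
bracket on the right is then `∑_j ζ_j ^ (-r) ∑_m (m - r) C(m+n, n) (ζ_j F) ^ m`, and summing over
the `k`-th roots of unity keeps exactly the terms with `m ≡ r [MOD k]`, i.e. `m = r + k q`, each
multiplied by `k`. Such a term is `k · k q · C(n+r+kq, n) F ^ r E ^ q`.
-/

open Complex Finset

section NegativeBinomialSeries

variable {𝕜 : Type*} [NormedField 𝕜] {x : 𝕜}

theorem hasSum_choose_mul_geometric_zpow (hx : ‖x‖ < 1) (n : ℕ) :
    HasSum (fun m : ℕ ↦ ((m + n).choose n : 𝕜) * x ^ m) ((1 - x) ^ (-((n : ℤ) + 1))) := by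
  convert hasSum_choose_mul_geometric_of_norm_lt_one n hx using 1
  rw [← Nat.cast_succ, zpow_neg, zpow_natCast, one_div]

theorem hasSum_choose_succ_mul_geometric_zpow (hx : ‖x‖ < 1) (n : ℕ) :
    HasSum (fun m : ℕ ↦ ((m + n).choose (n + 1) : 𝕜) * x ^ m)
      (x * (1 - x) ^ (-((n : ℤ) + 2))) := by
  rw [← hasSum_nat_add_iff' 1]
  convert! (hasSum_choose_mul_geometric_zpow hx (n + 1)).mul_left x using 1
  · ext m
    rw [add_right_comm, add_assoc, pow_succ]
    ring
  · simp [add_assoc, one_add_one_eq_two]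

theorem Nat.cast_mul_choose_add {R : Type*} [CommSemiring R] (m n : ℕ) :
    (m : R) * (m + n).choose n = (n + 1) * (m + n).choose (n + 1) := by
  have h := Nat.choose_succ_right_eq (m + n) n
  rw [Nat.add_sub_cancel] at h
  rw [mul_comm (m : R), mul_comm ((n : R) + 1)]
  exact_mod_cast congrArg (Nat.cast : ℕ → R) h.symm

theorem hasSum_sub_mul_choose_mul_geometric_zpow (hx : ‖x‖ < 1) (n : ℕ) (r : 𝕜) :
    HasSum (fun m : ℕ ↦ ((m : 𝕜) - r) * (m + n).choose n * x ^ m)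
      (-r * (1 - x) ^ (-((n : ℤ) + 1)) + (n + 1) * x * (1 - x) ^ (-((n : ℤ) + 2))) := by
  convert! ((hasSum_choose_succ_mul_geometric_zpow hx n).mul_left ((n : 𝕜) + 1)).sub
    ((hasSum_choose_mul_geometric_zpow hx n).mul_left r) using 1
  · ext m
    rw [sub_mul, sub_mul, Nat.cast_mul_choose_add]
    ring
  · ring

theorem hasSum_zpow_sub_mul_choose_mul_geometric {ξ : 𝕜} (hξ : ξ ≠ 0) (hx : ‖ξ * x‖ < 1)
    (n r : ℕ) :
    HasSum (fun m : ℕ ↦ ξ ^ ((m : ℤ) - r) * (((m : 𝕜) - r) * (m + n).choose n * x ^ m))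
      (-r * (ξ ^ (-(r : ℤ)) * (1 - ξ * x) ^ (-((n : ℤ) + 1)))
        + x * (n + 1) * (ξ ^ (-(r : ℤ) + 1) * (1 - ξ * x) ^ (-((n : ℤ) + 2)))) := by
  convert! (hasSum_sub_mul_choose_mul_geometric_zpow hx n r).mul_left (ξ ^ (-(r : ℤ))) using 1
  · ext m
    rw [sub_eq_neg_add, zpow_add₀ hξ, zpow_natCast, mul_pow]
    ring
  · rw [zpow_add₀ hξ, zpow_one]
    ring

end NegativeBinomialSeries

theorem IsPrimitiveRoot.sum_pow_zpow {K : Type*} [Field K] {ω : K} {k : ℕ}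
    (hω : IsPrimitiveRoot ω k) (d : ℤ) :
    ∑ j ∈ range k, (ω ^ j) ^ d = if (k : ℤ) ∣ d then (k : K) else 0 := by
  have hcomm : ∀ j : ℕ, (ω ^ j) ^ d = (ω ^ d) ^ j := fun j ↦ by
    rw [← zpow_natCast, ← zpow_mul, mul_comm, zpow_mul, zpow_natCast]
  simp_rw [hcomm]
  split_ifs with hd
  · simp [(hω.zpow_eq_one_iff_dvd d).mpr hd]
  · have hωd : (ω ^ d) ^ k = 1 := by rw [← hcomm, hω.pow_eq_one, one_zpow]
    rw [geom_sum_eq (mt (hω.zpow_eq_one_iff_dvd d).mp hd), hωd, sub_self, zero_div]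

theorem Nat.mem_range_add_mul_of_intCast_dvd_sub {k r m : ℕ} (hr : r < k)
    (h : (k : ℤ) ∣ m - r) : m ∈ Set.range (fun q ↦ r + k * q) := by
  have hmod : r = m % k := by
    rw [← Nat.mod_eq_of_lt hr]
    exact Nat.modEq_iff_dvd.mpr h
  exact ⟨m / k, hmod ▸ Nat.mod_add_div m k⟩

theorem IsPrimitiveRoot.hasSum_residueClass {K : Type*} [Field K] [TopologicalSpace K]
    [ContinuousAdd K] {ω : K} {k r : ℕ} (hω : IsPrimitiveRoot ω k) (hr : r < k) {g s : ℕ → K}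
    (hs : ∀ j ∈ range k, HasSum (fun m : ℕ ↦ (ω ^ j) ^ ((m : ℤ) - r) * g m) (s j)) :
    HasSum (fun q ↦ (k : K) * g (r + k * q)) (∑ j ∈ range k, s j) := by
  have hsum := hasSum_sum hs
  simp_rw [← sum_mul, hω.sum_pow_zpow] at hsum
  have hinj : Function.Injective (fun q ↦ r + k * q) :=
    (add_right_injective r).comp (mul_right_injective₀ (by omega))
  rw [← hinj.hasSum_iff fun m hm ↦ by
    rw [if_neg fun hd ↦ hm (Nat.mem_range_add_mul_of_intCast_dvd_sub hr hd), zero_mul]] at hsum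
  convert hsum using 2 with q
  simp

theorem statement1_general (k : ℕ) (hk : 1 ≤ k) (E F : ℂ)
    (hFk : F ^ k = E) (hF : ‖F‖ < 1) (hF0 : F ≠ 0)
    (ζ a : ℕ → ℂ)
    (hζ : ∀ j, ζ j = Complex.exp (2 * Real.pi * Complex.I * j / k))
    (ha : ∀ j, a j = 1 - ζ j * F)
    (n r : ℕ) (hr : r ≤ k - 1) :
    ∑' q : ℕ, ((n + r + k * q).choose n : ℂ) * E ^ q * q
      = ((k : ℂ) ^ 2)⁻¹ * F ^ (-(r : ℤ)) *
        (-(r : ℂ) * ∑ j ∈ Finset.range k, ζ j ^ (-(r : ℤ)) * a j ^ (-((n : ℤ) + 1))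
          + F * ((n : ℂ) + 1) *
            ∑ j ∈ Finset.range k, ζ j ^ (-(r : ℤ) + 1) * a j ^ (-((n : ℤ) + 2))) := by
  have hω : IsPrimitiveRoot (exp (2 * Real.pi * I / k)) k := isPrimitiveRoot_exp k (by omega)
  obtain rfl : ζ = fun j ↦ exp (2 * Real.pi * I / k) ^ j :=
    funext fun j ↦ by rw [hζ, ← exp_nat_mul]; ring_nf
  obtain rfl : a = _ := funext ha
  have hsum := hω.hasSum_residueClass (by omega) fun j _ ↦
    hasSum_zpow_sub_mul_choose_mul_geometric (x := F) (pow_ne_zero j (hω.ne_zero (by omega)))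
      (by rwa [norm_mul, norm_pow, hω.norm'_eq_one (by omega), one_pow, one_mul]) n r
  rw [sum_add_distrib, ← mul_sum, ← mul_sum] at hsum
  have hterm : ∀ q : ℕ, (k : ℂ) * ((((r + k * q : ℕ) : ℂ) - r) * (r + k * q + n).choose n
      * F ^ (r + k * q)) = ((k : ℂ) ^ 2 * F ^ r) * ((n + r + k * q).choose n * E ^ q * q) := by
    intro q
    rw [pow_add, pow_mul, hFk, show r + k * q + n = n + r + k * q by ring]
    push_cast
    ring
  simp_rw [hterm] at hsum
  have hk0 : (k : ℂ) ≠ 0 := Nat.cast_ne_zero.mpr (by omega)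
  rw [← hsum.tsum_eq, tsum_mul_left, zpow_neg, zpow_natCast]
  field_simp

/-- `∑_q C(n+r+kq, n) E^q q
  = k⁻² F^{-r} ( -r ∑_j ζ_j^{-r} a_j^{-(n+1)} + F(n+1) ∑_j ζ_j^{-r+1} a_j^{-(n+2)} )`. -/
theorem statement1 (k : ℕ) (hk : 1 ≤ k) (E F : ℂ) (hE : ‖E‖ < 1)
    (hFk : F ^ k = E) (hF : ‖F‖ < 1) (hF0 : F ≠ 0)
    (ζ a : ℕ → ℂ)
    (hζ : ∀ j, ζ j = Complex.exp (2 * Real.pi * Complex.I * j / k))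
    (ha : ∀ j, a j = 1 - ζ j * F)
    (n r : ℕ) (hr : r ≤ k - 1) :
    ∑' q : ℕ, ((n + r + k * q).choose n : ℂ) * E ^ q * q
      = ((k : ℂ) ^ 2)⁻¹ * F ^ (-(r : ℤ)) *
        (-(r : ℂ) * ∑ j ∈ Finset.range k, ζ j ^ (-(r : ℤ)) * a j ^ (-((n : ℤ) + 1))
          + F * ((n : ℂ) + 1) *
            ∑ j ∈ Finset.range k, ζ j ^ (-(r : ℤ) + 1) * a j ^ (-((n : ℤ) + 2))) :=
  statement1_general k hk E F hFk hF hF0 ζ a hζ ha n r hr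
end

section
/- For 0 < E < 1 real, F := E^{1/k}, and fixed integers k ≥ 1, 0 ≤ r ≤ k-1, l ≥ 0, the sequence S_n := ∑_{q=0}^∞ C(n + r + k·q, n) · E^q · q^l satisfies: there exists a nonzero finite constant C such that S_n / (n^l · (1-F)^{-n}) → C as n → ∞. -/
/-!
Write `E = F ^ k` and `m = r + k q`: the sum runs over the residue class `m ≡ r [MOD k]` of the
negative binomial series `∑ₘ C(n + m, n) F ^ m = (1 - F) ^ (-(n + 1))`. A roots-of-unity filter
expresses this partial series through the values `(1 - ω ^ j F) ^ (-(n + 1))`, `ω` a primitive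
`k`-th root of unity. Since `1 - F < ‖1 - ω ^ j F‖` for `j ≠ 0`, only `j = 0` survives at the scale
`(1 - F) ^ (-n)`, and it contributes the fraction `1 / k`.

The weight `q ^ l` is a polynomial of degree `l` in `m`. Expanding it in descending factorials
`m^{(i)} = m (m - 1) ⋯ (m - i + 1)` and using `m^{(i)} C(n + m, n) = (n + i)^{(i)} C(n + m, n + i)`
reduces `S n` to the same filtered series with shifted binomials, each growing like
`(n + i)^{(i)} (1 - F) ^ (-n)`; the top term `i = l` dominates and produces the factor `n ^ l`.
-/

open Filter Topology Finset Polynomial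

theorem Polynomial.exists_eval_natCast_eq_sum_descFactorial {R : Type*} [CommRing R] [IsDomain R]
    (N : ℕ) (p : R[X]) (hp : p.natDegree ≤ N) :
    ∃ b : ℕ → R, b N = p.coeff N ∧
      ∀ m : ℕ, p.eval (m : R) = ∑ i ∈ range (N + 1), b i * m.descFactorial i := by
  induction N generalizing p with
  | zero =>
    refine ⟨fun _ => p.coeff 0, rfl, fun m => ?_⟩
    rw [eq_C_of_natDegree_le_zero hp]
    simp
  | succ N ih =>
    set c := p.coeff (N + 1)
    have hmonic := monic_descPochhammer R (N + 1)
    have hdeg := descPochhammer_natDegree R (N + 1)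
    have hlead : (descPochhammer R (N + 1)).coeff (N + 1) = 1 := by
      rw [← hmonic.coeff_natDegree, hdeg]
    have hq : (p - C c * descPochhammer R (N + 1)).natDegree ≤ N := by
      refine natDegree_le_pred (n := N + 1) ?_ ?_
      · exact (natDegree_sub_le_of_le hp (natDegree_C_mul_le _ _)).trans
          (by rw [hdeg, max_self])
      · rw [coeff_sub, coeff_C_mul, hlead, mul_one, sub_self]
    obtain ⟨b, -, hb⟩ := ih _ hq
    refine ⟨Function.update b (N + 1) c, by simp, fun m => ?_⟩
    have hlow : ∀ i ∈ range (N + 1), Function.update b (N + 1) c i * m.descFactorial i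
        = b i * m.descFactorial i := fun i hi => by
      rw [Function.update_of_ne (by simp at hi; omega)]
    rw [sum_range_succ, sum_congr rfl hlow, ← hb, Function.update_self, eval_sub, eval_mul,
      eval_C, descPochhammer_eval_eq_descFactorial]
    ring

theorem Nat.descFactorial_mul_add_choose (n m i : ℕ) :
    m.descFactorial i * (n + m).choose n = (n + i).descFactorial i * (n + m).choose (n + i) := by
  rcases le_or_gt i m with h | h
  · have := Nat.choose_mul (n := n + m) (k := n + i) (s := n) (by omega)
    rw [Nat.add_sub_cancel_left, Nat.add_sub_cancel_left] at this
    rw [Nat.descFactorial_eq_factorial_mul_choose, Nat.descFactorial_eq_factorial_mul_choose,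
      ← Nat.choose_symm_add, mul_assoc, mul_assoc, mul_comm (m.choose i), ← this]
    ring
  · simp [Nat.descFactorial_eq_zero_iff_lt.2 h,
      Nat.choose_eq_zero_of_lt (by omega : n + m < n + i)]

theorem hasSum_add_choose_mul_geometric {𝕜 : Type*} [NormedField 𝕜] (n i : ℕ) {w : 𝕜}
    (hw : ‖w‖ < 1) :
    HasSum (fun m => ((n + m).choose (n + i) : 𝕜) * w ^ m) (w ^ i / (1 - w) ^ (n + i + 1)) := by
  rw [← hasSum_nat_add_iff' i]
  have hlow : ∑ m ∈ range i, ((n + m).choose (n + i) : 𝕜) * w ^ m = 0 :=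
    sum_eq_zero fun m hm => by
      rw [Nat.choose_eq_zero_of_lt (by simp at hm; omega), Nat.cast_zero, zero_mul]
  rw [hlow, sub_zero, div_eq_mul_one_div]
  refine ((hasSum_choose_mul_geometric_of_norm_lt_one (n + i) hw).mul_left (w ^ i)).congr_fun
    fun m => ?_
  rw [show n + (m + i) = m + (n + i) by omega, pow_add]
  ring

theorem IsPrimitiveRoot.sum_inv_pow_mul_pow_eq_ite {K : Type*} [Field K] {ω : K} {k r : ℕ}
    (hω : IsPrimitiveRoot ω k) (hr : r ≤ k) (m : ℕ) :
    ∑ j ∈ range k, (ω ^ (j * r))⁻¹ * ω ^ (j * m) = if m ≡ r [MOD k] then (k : K) else 0 := by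
  rcases Nat.eq_zero_or_pos k with rfl | hk
  · simp
  have hterm : ∀ j, (ω ^ (j * r))⁻¹ * ω ^ (j * m) = (ω ^ (m + (k - r))) ^ j := by
    intro j
    rw [inv_mul_eq_iff_eq_mul₀ (pow_ne_zero _ (hω.ne_zero hk.ne')), ← pow_mul, ← pow_add,
      show j * r + (m + (k - r)) * j = j * m + k * j by zify [hr]; ring, pow_add, pow_mul ω k,
      hω.pow_eq_one, one_pow, mul_one]
  have hk0 : r + (k - r) ≡ 0 [MOD k] := by
    rw [Nat.add_sub_cancel' hr]; exact Nat.modEq_zero_iff_dvd.2 dvd_rfl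
  have hdvd : m ≡ r [MOD k] ↔ k ∣ m + (k - r) :=
    ⟨fun h => Nat.modEq_zero_iff_dvd.1 ((h.add_right _).trans hk0),
      fun h => Nat.ModEq.add_right_cancel' _ ((Nat.modEq_zero_iff_dvd.2 h).trans hk0.symm)⟩
  rw [sum_congr rfl fun j _ => hterm j]
  split_ifs with h
  · simp [(hω.pow_eq_one_iff_dvd _).2 (hdvd.1 h)]
  · have hne : ω ^ (m + (k - r)) ≠ 1 := fun h1 => h (hdvd.2 ((hω.pow_eq_one_iff_dvd _).1 h1))
    rw [geom_sum_eq hne, ← pow_mul, mul_comm, pow_mul, hω.pow_eq_one, one_pow, sub_self,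
      zero_div]

theorem IsPrimitiveRoot.hasSum_comp_add_mul_s2 {K : Type*} [Field K] [TopologicalSpace K]
    [IsTopologicalRing K] {ω : K} {k r : ℕ} (hω : IsPrimitiveRoot ω k) (hr : r < k)
    {c G : ℕ → K} (hG : ∀ j ∈ range k, HasSum (fun m => c m * ω ^ (j * m)) (G j)) :
    HasSum (fun q => c (r + k * q)) ((k : K)⁻¹ * ∑ j ∈ range k, (ω ^ (j * r))⁻¹ * G j) := by
  have : NeZero k := ⟨by omega⟩
  have hk : (k : K) ≠ 0 := hω.neZero'.out
  have hsum := (hasSum_sum fun j hj => (hG j hj).mul_left (ω ^ (j * r))⁻¹).mul_left (k : K)⁻¹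
  have hfilter : ∀ m, (k : K)⁻¹ * ∑ j ∈ range k, (ω ^ (j * r))⁻¹ * (c m * ω ^ (j * m))
      = if m ≡ r [MOD k] then c m else 0 := by
    intro m
    simp_rw [mul_left_comm _ (c m), ← mul_sum, hω.sum_inv_pow_mul_pow_eq_ite hr.le m]
    split_ifs
    · field_simp
    · simp
  have hinj : Function.Injective (fun q : ℕ => r + k * q) :=
    (add_right_injective r).comp (mul_right_injective₀ (by omega))
  refine ((hinj.hasSum_iff fun m hm => ?_).2
    (hsum.congr_fun fun m => (hfilter m).symm)).congr_fun fun q => ?_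
  · rw [if_neg]
    intro h
    refine hm ⟨m / k, ?_⟩
    have := Nat.mod_add_div m k
    rw [h, Nat.mod_eq_of_lt hr] at this
    exact this
  · simp [Nat.ModEq, Nat.add_mul_mod_self_left]

theorem IsPrimitiveRoot.hasSum_choose_mul_pow_add_mul {k r : ℕ} {ω x : ℂ}
    (hω : IsPrimitiveRoot ω k) (hr : r < k) (hx : ‖x‖ < 1) (n i : ℕ) :
    HasSum (fun q => ((n + r + k * q).choose (n + i) : ℂ) * x ^ (r + k * q))
      ((k : ℂ)⁻¹ * ∑ j ∈ range k,
        (ω ^ (j * r))⁻¹ * ((ω ^ j * x) ^ i / (1 - ω ^ j * x) ^ (n + i + 1))) := by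
  have hnorm : ∀ j, ‖ω ^ j * x‖ < 1 := fun j => by
    rwa [norm_mul, norm_pow, hω.norm'_eq_one (by omega), one_pow, one_mul]
  refine (hω.hasSum_comp_add_mul_s2 (c := fun m => ((n + m).choose (n + i) : ℂ) * x ^ m) hr
    fun j _ => (hasSum_add_choose_mul_geometric n i (hnorm j)).congr_fun fun m => ?_).congr_fun
    fun q => by rw [add_assoc]
  rw [mul_pow, ← pow_mul]
  ring

theorem Complex.one_sub_lt_norm_one_sub_mul {w : ℂ} (hw : ‖w‖ = 1) (hw1 : w ≠ 1) {F : ℝ}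
    (hF : 0 < F) : 1 - F < ‖1 - w * F‖ := by
  have hn : w.re * w.re + w.im * w.im = 1 := by
    rw [← normSq_apply, normSq_eq_norm_sq, hw, one_pow]
  have hre : w.re < 1 := by
    refine lt_of_le_of_ne (by nlinarith [mul_self_nonneg w.im]) fun h => hw1 (ext h ?_)
    simpa [h] using hn
  have hsq : ‖1 - w * F‖ ^ 2 = (1 - F) ^ 2 + 2 * F * (1 - w.re) := by
    rw [← normSq_eq_norm_sq, normSq_apply]
    simp only [sub_re, sub_im, mul_re, mul_im, one_re, one_im, ofReal_re, ofReal_im]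
    linear_combination F ^ 2 * hn
  have hlt : (1 - F) ^ 2 < ‖1 - w * F‖ ^ 2 := by rw [hsq]; nlinarith
  exact (le_abs_self _).trans_lt (abs_lt_of_sq_lt_sq hlt (norm_nonneg _))

theorem tendsto_add_descFactorial_div_pow {i d : ℕ} (hid : i ≤ d) :
    Tendsto (fun n : ℕ => ((n + i).descFactorial i : ℝ) / (n : ℝ) ^ d) atTop
      (𝓝 (if i = d then 1 else 0)) := by
  set P : ℝ[X] := (descPochhammer ℝ i).comp (X + C (i : ℝ))
  have hP : ∀ n : ℕ, P.eval (n : ℝ) = (n + i).descFactorial i := fun n => by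
    simp [P, ← descPochhammer_eval_eq_descFactorial]
  have hmonic : P.Monic := (monic_descPochhammer ℝ i).comp_X_add_C _
  have hdeg : P.degree = i := by
    rw [degree_eq_natDegree hmonic.ne_zero, natDegree_comp, descPochhammer_natDegree,
      natDegree_X_add_C, mul_one]
  have hlim : Tendsto (fun x : ℝ => P.eval x / (X ^ d : ℝ[X]).eval x) atTop
      (𝓝 (if i = d then 1 else 0)) := by
    split_ifs with h
    · simpa [hmonic.leadingCoeff] using
        div_tendsto_atTop_leadingCoeff_div_of_degree_eq P (X ^ d) (by simp [hdeg, h])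
    · exact div_tendsto_atTop_zero_of_degree_lt P (X ^ d) (by simp [hdeg]; omega)
  refine (hlim.comp tendsto_natCast_atTop_atTop).congr fun n => ?_
  simp [hP]

theorem tendsto_one_sub_pow_mul_tsum_choose_mul_pow {k r : ℕ} (hr : r < k) {F : ℝ} (hF0 : 0 < F)
    (hF1 : F < 1) (i : ℕ) :
    Tendsto (fun n => (1 - F) ^ (n + i + 1) *
        ∑' q, ((n + r + k * q).choose (n + i) : ℝ) * F ^ (r + k * q)) atTop (𝓝 (F ^ i / k)) := by
  set ω : ℂ := Complex.exp (2 * Real.pi * Complex.I / k)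
  have hω : IsPrimitiveRoot ω k := Complex.isPrimitiveRoot_exp k (by omega)
  have hωpow : ∀ j, ‖ω ^ j‖ = 1 := fun j => by
    rw [norm_pow, hω.norm'_eq_one (by omega), one_pow]
  have hnorm : ∀ j, ‖ω ^ j * F‖ = F := fun j => by
    rw [norm_mul, hωpow, one_mul, Complex.norm_real, Real.norm_of_nonneg hF0.le]
  have hne : ∀ j, 1 - ω ^ j * F ≠ 0 := fun j h => by
    have := hnorm j
    rw [← sub_eq_zero.1 h, norm_one] at this
    exact hF1.ne' this
  have hsum := hω.hasSum_choose_mul_pow_add_mul hr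
    (x := F) (by rwa [Complex.norm_real, Real.norm_of_nonneg hF0.le])
  set a : ℕ → ℂ := fun j => (ω ^ (j * r))⁻¹ * (ω ^ j * F) ^ i
  set ρ : ℕ → ℂ := fun j => (1 - F) / (1 - ω ^ j * F)
  have hrepr : ∀ n, (((1 - F) ^ (n + i + 1) *
      ∑' q, ((n + r + k * q).choose (n + i) : ℝ) * F ^ (r + k * q) : ℝ) : ℂ)
      = (k : ℂ)⁻¹ * ∑ j ∈ range k, a j * ρ j ^ (n + i + 1) := fun n => by
    push_cast [Complex.ofReal_tsum]
    rw [(hsum n i).tsum_eq, mul_left_comm, mul_sum]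
    congr 1
    refine sum_congr rfl fun j _ => ?_
    simp only [a, ρ, div_pow]
    field_simp [pow_ne_zero _ (hne j)]
  have hterm : ∀ j ∈ range k, Tendsto (fun n => a j * ρ j ^ (n + i + 1)) atTop
      (𝓝 (if j = 0 then (F : ℂ) ^ i else 0)) := by
    intro j hj
    split_ifs with h
    · subst h
      have hρ : ρ 0 = 1 := by
        simp only [ρ, pow_zero, one_mul]
        exact div_self (by simpa using hne 0)
      simp [hρ, a]
    · have hρ : ‖ρ j‖ < 1 := by
        rw [norm_div, div_lt_one (norm_pos_iff.2 (hne j))]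
        have := Complex.one_sub_lt_norm_one_sub_mul (hωpow j)
          (hω.pow_ne_one_of_pos_of_lt h (mem_range.1 hj)) hF0
        rwa [← Complex.ofReal_one, ← Complex.ofReal_sub, Complex.norm_real,
          Real.norm_of_nonneg (by linarith)]
      simpa [add_assoc] using ((tendsto_pow_atTop_nhds_zero_of_norm_lt_one hρ).comp
        (tendsto_add_atTop_nat (i + 1))).const_mul (a j)
  have hlim := (tendsto_finsetSum _ hterm).const_mul (k : ℂ)⁻¹
  rw [sum_ite_eq' (range k) 0, if_pos (mem_range.2 (by omega))] at hlim
  rw [← tendsto_ofReal_iff, show ((F ^ i / k : ℝ) : ℂ) = (k : ℂ)⁻¹ * F ^ i by push_cast; ring]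
  exact hlim.congr fun n => (hrepr n).symm

theorem tendsto_one_sub_pow_div_mul_tsum_choose_mul_pow_mul_eval {k r : ℕ} (hr : r < k) {F : ℝ}
    (hF0 : 0 < F) (hF1 : F < 1) (p : ℝ[X]) :
    Tendsto (fun n : ℕ => (1 - F) ^ n / (n : ℝ) ^ p.natDegree *
        ∑' q, ((n + r + k * q).choose n : ℝ) * F ^ (r + k * q) * p.eval ((r + k * q : ℕ) : ℝ))
      atTop (𝓝 (p.leadingCoeff * F ^ p.natDegree / (k * (1 - F) ^ (p.natDegree + 1)))) := by
  set d := p.natDegree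
  obtain ⟨b, hbd, hb⟩ := p.exists_eval_natCast_eq_sum_descFactorial d le_rfl
  have hinj : Function.Injective (fun q : ℕ => r + k * q) :=
    (add_right_injective r).comp (mul_right_injective₀ (by omega))
  have hsummable : ∀ n i,
      Summable fun q => ((n + r + k * q).choose (n + i) : ℝ) * F ^ (r + k * q) :=
    fun n i => ((hasSum_add_choose_mul_geometric (𝕜 := ℝ) n i
      (by rwa [Real.norm_of_nonneg hF0.le])).summable.comp_injective hinj).congr fun q => by
        simp [add_assoc]
  have hexpand : ∀ n : ℕ,
      ∑' q, ((n + r + k * q).choose n : ℝ) * F ^ (r + k * q) * p.eval ((r + k * q : ℕ) : ℝ)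
        = ∑ i ∈ range (d + 1), b i * (n + i).descFactorial i *
            ∑' q, ((n + r + k * q).choose (n + i) : ℝ) * F ^ (r + k * q) := fun n => by
    simp_rw [← tsum_mul_left]
    rw [← Summable.tsum_finsetSum fun i _ => (hsummable n i).mul_left _]
    refine tsum_congr fun q => ?_
    rw [hb, mul_sum]
    refine sum_congr rfl fun i _ => ?_
    have := congrArg (Nat.cast : ℕ → ℝ) (Nat.descFactorial_mul_add_choose n (r + k * q) i)
    push_cast [← add_assoc] at this
    linear_combination (b i * F ^ (r + k * q)) * this
  have hterm : ∀ i ∈ range (d + 1), Tendsto (fun n : ℕ =>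
      b i * ((n + i).descFactorial i / (n : ℝ) ^ d) * ((1 - F) ^ (n + i + 1) *
        ∑' q, ((n + r + k * q).choose (n + i) : ℝ) * F ^ (r + k * q)) / (1 - F) ^ (i + 1))
      atTop (𝓝 (b i * (if i = d then 1 else 0) * (F ^ i / k) / (1 - F) ^ (i + 1))) := fun i hi =>
    (((tendsto_add_descFactorial_div_pow (by simp at hi; omega)).const_mul (b i)).mul
      (tendsto_one_sub_pow_mul_tsum_choose_mul_pow hr hF0 hF1 i)).div_const _
  have hlim := tendsto_finsetSum _ hterm
  simp only [mul_ite, mul_one, mul_zero, ite_mul, zero_mul, ite_div, zero_div] at hlim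
  rw [sum_ite_eq' (range (d + 1)) d, if_pos (self_mem_range_succ d), hbd, coeff_natDegree] at hlim
  rw [show p.leadingCoeff * F ^ d / (k * (1 - F) ^ (d + 1))
      = p.leadingCoeff * (F ^ d / k) / (1 - F) ^ (d + 1) by rw [← mul_div_assoc, div_div]]
  refine hlim.congr fun n => ?_
  have h1F : 1 - F ≠ 0 := by linarith
  rw [hexpand, mul_sum]
  refine sum_congr rfl fun i _ => ?_
  field_simp
  ring

/-- For real `0 < E < 1`, `F = E^{1/k}`, fixed `k ≥ 1`, `0 ≤ r ≤ k-1`, `l ≥ 0`,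
the sequence `S n = ∑_q C(n+r+kq, n) E^q q^l` is asymptotically equivalent to
`n^l (1-F)^{-n}`: the ratio tends to a finite nonzero constant. -/
theorem statement2 (k : ℕ) (hk : 1 ≤ k) (E : ℝ) (hE0 : 0 < E) (hE1 : E < 1)
    (F : ℝ) (hF : F = E ^ ((1 : ℝ) / k))
    (r l : ℕ) (hr : r ≤ k - 1)
    (S : ℕ → ℝ)
    (hS : ∀ n, S n = ∑' q : ℕ, ((n + r + k * q).choose n : ℝ) * E ^ q * (q : ℝ) ^ l) :
    ∃ C : ℝ, C ≠ 0 ∧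
      Tendsto (fun n : ℕ => S n / ((n : ℝ) ^ l * (1 - F) ^ (-(n : ℤ)))) atTop (nhds C) := by
  have hk0 : (k : ℝ) ≠ 0 := by positivity
  have hF0 : 0 < F := hF ▸ Real.rpow_pos_of_pos hE0 _
  have hF1 : F < 1 := hF ▸ Real.rpow_lt_one hE0.le hE1 (by positivity)
  have hE : E = F ^ k := by
    rw [hF, ← Real.rpow_natCast, ← Real.rpow_mul hE0.le, one_div_mul_cancel hk0, Real.rpow_one]
  set p : ℝ[X] := (C (k : ℝ)⁻¹ * (X - C (r : ℝ))) ^ l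
  have hpdeg : p.natDegree = l := by
    rw [natDegree_pow, natDegree_C_mul (inv_ne_zero hk0), natDegree_X_sub_C, mul_one]
  have hplc : p.leadingCoeff = ((k : ℝ) ^ l)⁻¹ := by
    rw [leadingCoeff_pow, leadingCoeff_mul, leadingCoeff_C, leadingCoeff_X_sub_C, mul_one, inv_pow]
  have hpeval : ∀ q : ℕ, p.eval ((r + k * q : ℕ) : ℝ) = (q : ℝ) ^ l := fun q => by
    rw [eval_pow, eval_mul, eval_C, eval_sub, eval_X, eval_C]
    push_cast
    rw [add_sub_cancel_left, inv_mul_cancel_left₀ hk0]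
  have hlim := tendsto_one_sub_pow_div_mul_tsum_choose_mul_pow_mul_eval
    (show r < k by omega) hF0 hF1 p
  rw [hpdeg, hplc] at hlim
  have h1F := sub_pos.2 hF1
  refine ⟨_, by positivity, (hlim.const_mul (F ^ r)⁻¹).congr fun n => ?_⟩
  have hsummand : ∀ q : ℕ, ((n + r + k * q).choose n : ℝ) * E ^ q * (q : ℝ) ^ l
      = (F ^ r)⁻¹ * (((n + r + k * q).choose n : ℝ) * F ^ (r + k * q) *
          p.eval ((r + k * q : ℕ) : ℝ)) := fun q => by
    rw [hpeval, hE, ← pow_mul, pow_add]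
    field_simp
  rw [hS n, tsum_congr hsummand, tsum_mul_left, zpow_neg, zpow_natCast]
  field_simp
end

section
/- With α_{r,n}(t) := ∑_{q=0}^∞ C(r + kq + n, n) · ε^q · e^{-iqt} · z₁^{r+kq} · z₂^n in the Drury-Arveson space H²₂, the element α_{r,n}(t) is orthogonal to g·(z₁^k − ε·e^{it}) for every polynomial g ∈ ℂ[z₁, z₂]; that is, α_{r,n}(t) lies in the orthogonal complement of the closure of the ideal ⟨z₁^k − ε·e^{it}⟩ in H²₂. -/
/-! Pairing `α_{r,n}(t)` with `z₁^M z₂^N` picks out the single term of the series with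
`r + kq = M` and `n = N`, and there the binomial weight `C(M+n, n)` cancels against
`‖z₁^M z₂^N‖² = C(M+n, M)⁻¹`, leaving `(ε e^{it})^q`. As `0 ≤ r < k`, the exponents `M + k`
and `M` are hit by consecutive values of `q` or by none, so
`⟪α, z₁^{M+k} z₂^N⟫ = ε e^{it} ⟪α, z₁^M z₂^N⟫`, which is orthogonality to
`z₁^M z₂^N (z₁^k − ε e^{it})`. -/

noncomputable section

/-- The Drury-Arveson space `H²₂`, modeled as `ℓ²(ℕ × ℕ)` via the orthonormal basis
of normalized monomials. -/
abbrev DruryArveson2 : Type := lp (fun _ : ℕ × ℕ => ℂ) 2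

/-- The monomial `z₁^m z₂^n ∈ H²₂`; it has squared norm `ω_{m,n} = C(m+n, m)⁻¹`,
and distinct monomials are orthogonal. -/
def mono (m n : ℕ) : DruryArveson2 :=
  (Real.sqrt (((m + n).choose m : ℝ)⁻¹) : ℂ) • lp.single 2 (m, n) 1

/-- `α_{r,n}(t) = ∑_q C(r+kq+n, n) ε^q e^{-iqt} z₁^{r+kq} z₂^n`. -/
def alphaDA (k r n : ℕ) (ε t : ℝ) : DruryArveson2 :=
  ∑' q : ℕ, (((r + k * q + n).choose n : ℂ) * ε ^ q * Complex.exp (-(Complex.I * q * t))) •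
    mono (r + k * q) n

theorem inner_tsum_left {𝕜 E ι : Type*} [RCLike 𝕜] [NormedAddCommGroup E] [InnerProductSpace 𝕜 E]
    {f : ι → E} (hf : Summable f) (y : E) :
    inner 𝕜 (∑' i, f i) y = ∑' i, inner 𝕜 (f i) y := by
  have h := (hf.hasSum.mapL (innerSL 𝕜 y)).tsum_eq
  simp only [innerSL_apply_apply] at h
  rw [← inner_conj_symm, ← h, RCLike.conj_tsum]
  simp only [inner_conj_symm]

theorem inner_finsuppSum_smul_sub_smul_eq_zero {𝕜 E ι : Type*} [RCLike 𝕜]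
    [NormedAddCommGroup E] [InnerProductSpace 𝕜 E] {x : E} {u v : ι → E} {w : 𝕜}
    (h : ∀ i, inner 𝕜 x (u i) = w * inner 𝕜 x (v i)) (c : ι →₀ 𝕜) :
    inner 𝕜 x (c.sum fun i a => a • (u i - w • v i)) = 0 := by
  rw [Finsupp.sum, inner_sum]
  refine Finset.sum_eq_zero fun i _ => ?_
  rw [inner_smul_right, inner_sub_right, inner_smul_right, h, sub_self, mul_zero]

theorem inner_mono_mono (m n m' n' : ℕ) :
    inner ℂ (mono m n) (mono m' n') =
      if (m, n) = (m', n') then (((m + n).choose m : ℂ))⁻¹ else 0 := by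
  rw [mono, mono, inner_smul_left, inner_smul_right, lp.inner_single_left, lp.single_apply]
  split_ifs with h
  · obtain ⟨rfl, rfl⟩ := Prod.mk.inj h
    rw [Pi.single_eq_same, Complex.conj_ofReal, inner_self_eq_norm_sq_to_K]
    simp only [norm_one, RCLike.ofReal_one, one_pow, mul_one]
    rw [← Complex.ofReal_mul, Real.mul_self_sqrt (by positivity)]
    push_cast; rfl
  · simp [h]

def alphaTerm (k r n : ℕ) (ε t : ℝ) (q : ℕ) : DruryArveson2 :=
  (((r + k * q + n).choose n : ℂ) * ε ^ q * Complex.exp (-(Complex.I * q * t))) •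
    mono (r + k * q) n

theorem alphaDA_eq_tsum (k r n : ℕ) (ε t : ℝ) :
    alphaDA k r n ε t = ∑' q, alphaTerm k r n ε t q :=
  rfl

theorem inner_alphaTerm_mono (k r n : ℕ) (ε t : ℝ) (q M N : ℕ) :
    inner ℂ (alphaTerm k r n ε t q) (mono M N) =
      if (r + k * q, n) = (M, N) then ((ε : ℂ) * Complex.exp (Complex.I * t)) ^ q else 0 := by
  rw [alphaTerm, inner_smul_left, inner_mono_mono]
  split_ifs
  · have hchoose : ((r + k * q + n).choose n : ℂ) ≠ 0 := by
      exact_mod_cast (Nat.choose_pos (Nat.le_add_left n _)).ne'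
    rw [Nat.choose_symm_add, map_mul, map_mul, Complex.conj_natCast, map_pow,
      Complex.conj_ofReal, ← Complex.exp_conj, mul_pow, ← Complex.exp_nat_mul]
    simp only [map_neg, map_mul, Complex.conj_I, Complex.conj_natCast, Complex.conj_ofReal]
    field_simp
  · rw [mul_zero]

theorem inner_alphaDA_mono {k r n : ℕ} {ε t : ℝ} (hS : Summable (alphaTerm k r n ε t))
    (M N : ℕ) :
    inner ℂ (alphaDA k r n ε t) (mono M N) =
      ∑' q, if (r + k * q, n) = (M, N) then ((ε : ℂ) * Complex.exp (Complex.I * t)) ^ q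
        else 0 := by
  rw [alphaDA_eq_tsum, inner_tsum_left hS]
  exact tsum_congr fun q => inner_alphaTerm_mono k r n ε t q M N

theorem inner_alphaDA_mono_pow {k r n : ℕ} {ε t : ℝ} (hk : 0 < k)
    (hS : Summable (alphaTerm k r n ε t)) (q : ℕ) :
    inner ℂ (alphaDA k r n ε t) (mono (r + k * q) n) =
      ((ε : ℂ) * Complex.exp (Complex.I * t)) ^ q := by
  rw [inner_alphaDA_mono hS]
  simp only [Prod.mk.injEq, add_right_inj, mul_right_inj' hk.ne', and_true]
  exact tsum_ite_eq q _

theorem inner_alphaDA_mono_of_forall_ne {k r n : ℕ} {ε t : ℝ}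
    (hS : Summable (alphaTerm k r n ε t)) {M N : ℕ} (h : ∀ q, (r + k * q, n) ≠ (M, N)) :
    inner ℂ (alphaDA k r n ε t) (mono M N) = 0 := by
  rw [inner_alphaDA_mono hS]
  simp only [h, if_false, tsum_zero]

theorem inner_alphaDA_mono_add_left {k r n : ℕ} (hr : r < k) (ε t : ℝ) (M N : ℕ) :
    inner ℂ (alphaDA k r n ε t) (mono (M + k) N) =
      (ε * Complex.exp (Complex.I * t)) * inner ℂ (alphaDA k r n ε t) (mono M N) := by
  by_cases hS : Summable (alphaTerm k r n ε t)
  swap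
  -- a divergent series is the junk value `∑' = 0`
  · simp only [alphaDA_eq_tsum, tsum_eq_zero_of_not_summable hS, inner_zero_left, mul_zero]
  by_cases h : ∃ q, (r + k * q, n) = (M, N)
  · obtain ⟨q, hq⟩ := h
    obtain ⟨rfl, rfl⟩ := Prod.mk.inj hq
    rw [show r + k * q + k = r + k * (q + 1) by ring, inner_alphaDA_mono_pow (by omega) hS,
      inner_alphaDA_mono_pow (by omega) hS, pow_succ']
  · simp only [not_exists] at h
    rw [inner_alphaDA_mono_of_forall_ne hS h, mul_zero]
    refine inner_alphaDA_mono_of_forall_ne hS ?_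
    rintro (_ | q) hq <;> obtain ⟨hM, rfl⟩ := Prod.mk.inj hq
    · omega
    · exact h q (Prod.ext (by rw [Nat.mul_succ] at hM; omega) rfl)

theorem statement4_general (k : ℕ) (hk : 1 ≤ k) (ε t : ℝ)
    (r n : ℕ) (hr : r ≤ k - 1) (c : (ℕ × ℕ) →₀ ℂ) :
    (inner ℂ (alphaDA k r n ε t)
      (c.sum fun p v => v •
        (mono (p.1 + k) p.2 - ((ε : ℂ) * Complex.exp (Complex.I * t)) • mono p.1 p.2)) : ℂ)
      = 0 := by
  refine inner_finsuppSum_smul_sub_smul_eq_zero (fun p => ?_) c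
  exact inner_alphaDA_mono_add_left (by omega) ε t p.1 p.2

/-- `α_{r,n}(t)` is orthogonal to `g·(z₁^k − ε e^{it})` for every polynomial
`g = ∑ c_{M,N} z₁^M z₂^N`; i.e. it lies in the orthogonal complement of the closure of
the ideal `⟨z₁^k − ε e^{it}⟩` in `H²₂`. -/
theorem statement4 (k : ℕ) (hk : 1 ≤ k) (ε t : ℝ) (hε0 : 0 < ε) (hε1 : ε < 1)
    (r n : ℕ) (hr : r ≤ k - 1) (c : (ℕ × ℕ) →₀ ℂ) :
    (inner ℂ (alphaDA k r n ε t)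
      (c.sum fun p v => v •
        (mono (p.1 + k) p.2 - ((ε : ℂ) * Complex.exp (Complex.I * t)) • mono p.1 p.2)) : ℂ)
      = 0 :=
  statement4_general k hk ε t r n hr c

end
end

section
/- The squared Drury-Arveson norm of α_{r,n}(t) equals ‖α_{r,n}(t)‖² = ∑_{q=0}^∞ C(r+kq+n, n) · ε^{2q} = F^{-r} · k^{-1} · ∑_{j=0}^{k-1} ζ_j^{-r} · a_j^{-(n+1)}, where F := ε^{2/k}, ζ_j := exp(2πij/k), a_j := 1 − ζ_j·F. In particular ‖α_{r,n}(t)‖ is independent of t. -/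
noncomputable section

/-- `‖α_{r,n}(t)‖² = ∑_q C(r+kq+n, n) ε^{2q}
  = F^{-r} k⁻¹ ∑_{j<k} ζ_j^{-r} a_j^{-(n+1)}` where `F = ε^{2/k}`, `ζ_j = e^{2πij/k}`,
`a_j = 1 - ζ_j F`; in particular the norm is independent of `t`. -/
theorem statement6 (k : ℕ) (hk : 1 ≤ k) (ε t : ℝ) (hε0 : 0 < ε) (hε1 : ε < 1)
    (r n : ℕ) (hr : r ≤ k - 1)
    (F : ℝ) (hF : F = ε ^ ((2 : ℝ) / (k : ℝ)))
    (ζ a : ℕ → ℂ)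
    (hζ : ∀ j, ζ j = Complex.exp (2 * Real.pi * Complex.I * j / k))
    (ha : ∀ j, a j = 1 - ζ j * (F : ℂ)) :
    ‖alphaDA k r n ε t‖ ^ 2 = ∑' q : ℕ, ((r + k * q + n).choose n : ℝ) * ε ^ (2 * q) ∧
    ((∑' q : ℕ, ((r + k * q + n).choose n : ℝ) * ε ^ (2 * q) : ℝ) : ℂ)
      = (F : ℂ) ^ (-(r : ℤ)) * (k : ℂ)⁻¹ *
          ∑ j ∈ Finset.range k, ζ j ^ (-(r : ℤ)) * a j ^ (-((n : ℤ) + 1)) := by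
  classical
  have hkpos : 0 < k := hk
  have hknz : (k : ℝ) ≠ 0 := Nat.cast_ne_zero.mpr (by omega)
  have hknzC : (k : ℂ) ≠ 0 := Nat.cast_ne_zero.mpr (by omega)
  have hF0 : 0 < F := hF ▸ Real.rpow_pos_of_pos hε0 _
  have hF1 : F < 1 := by
    rw [hF]; exact Real.rpow_lt_one hε0.le hε1 (by positivity)
  have hFneC : (F : ℂ) ≠ 0 := by exact_mod_cast hF0.ne'
  have hFk : F ^ k = ε ^ 2 := by
    rw [hF, ← Real.rpow_natCast (ε ^ ((2 : ℝ) / (k : ℝ))) k, ← Real.rpow_mul hε0.le,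
      div_mul_cancel₀ _ hknz, Real.rpow_two]
  have hFkC : (F : ℂ) ^ k = (ε : ℂ) ^ 2 := by exact_mod_cast congrArg Complex.ofReal hFk
  have injm : Function.Injective (fun q : ℕ => r + k * q) := by
    intro x y hxy
    simp only at hxy
    exact Nat.eq_of_mul_eq_mul_left hkpos (Nat.add_left_cancel hxy)
  have hFn : ‖F‖ < 1 := by rw [Real.norm_eq_abs, abs_of_pos hF0]; exact hF1
  -- real summability
  have hsumR : Summable (fun q : ℕ => ((r + k * q + n).choose n : ℝ) * ε ^ (2 * q)) := by
    have h1 : Summable (fun p : ℕ => ((p + n).choose n : ℝ) * F ^ p) :=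
      (hasSum_choose_mul_geometric_of_norm_lt_one n hFn).summable
    have h2 := (h1.comp_injective injm).mul_left ((F ^ r)⁻¹)
    refine h2.congr fun q => ?_
    have hne : F ^ r ≠ 0 := pow_ne_zero _ hF0.ne'
    simp only [Function.comp]
    rw [pow_add, pow_mul, hFk, pow_mul]
    field_simp
  -- PART 1
  have honb : Orthonormal ℂ (fun i : ℕ × ℕ => (lp.single 2 i 1 : DruryArveson2)) := by
    rw [orthonormal_iff_ite]
    intro i j
    rw [lp.inner_single_left]
    by_cases h : i = j
    · subst h
      simp [lp.single_apply_self, RCLike.inner_apply]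
    · rw [lp.single_apply_ne 2 j 1 h]
      simp [h]
  have hon : Orthonormal ℂ
      (fun q : ℕ => (lp.single 2 ((r + k * q, n) : ℕ × ℕ) 1 : DruryArveson2)) := by
    have hinj2 : Function.Injective (fun q : ℕ => ((r + k * q, n) : ℕ × ℕ)) := by
      intro x y hxy
      exact injm (congrArg Prod.fst hxy)
    exact honb.comp _ hinj2
  set c : ℕ → ℂ := fun q =>
    ((r + k * q + n).choose n : ℂ) * (ε : ℂ) ^ q * Complex.exp (-(Complex.I * q * t)) with hc
  set s : ℕ → ℝ := fun q => Real.sqrt (((r + k * q + n).choose (r + k * q) : ℝ)⁻¹) with hs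
  set d : ℕ → ℂ := fun q => c q * (s q : ℂ) with hd
  have hCpos : ∀ q : ℕ, (0 : ℝ) < ((r + k * q + n).choose n : ℝ) := by
    intro q
    exact_mod_cast Nat.choose_pos (Nat.le_add_left n (r + k * q))
  have hnormd : ∀ q, ‖d q‖ ^ 2 = ((r + k * q + n).choose n : ℝ) * ε ^ (2 * q) := by
    intro q
    have hcs : ((r + k * q + n).choose (r + k * q) : ℝ) = ((r + k * q + n).choose n : ℝ) := by
      norm_cast
      exact Nat.choose_symm_add
    have hex : ‖Complex.exp (-(Complex.I * q * t))‖ = 1 := by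
      rw [show -(Complex.I * (q : ℂ) * (t : ℝ)) = ((-(q * t) : ℝ) : ℂ) * Complex.I by
        push_cast; ring]
      exact Complex.norm_exp_ofReal_mul_I _
    have hsq : (s q) ^ 2 = (((r + k * q + n).choose n : ℝ))⁻¹ := by
      rw [hs]
      rw [Real.sq_sqrt (by positivity), hcs]
    have h1 : ‖d q‖ = ((r + k * q + n).choose n : ℝ) * ε ^ q * s q := by
      rw [hd, hc, hs]
      simp only [norm_mul, Complex.norm_natCast, norm_pow, Complex.norm_real, Real.norm_eq_abs,
        hex, mul_one]
      rw [abs_of_pos hε0, abs_of_nonneg (Real.sqrt_nonneg _)]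
    rw [h1]
    rw [mul_pow, mul_pow, hsq]
    have := (hCpos q).ne'
    rw [← pow_mul, mul_comm q 2]
    field_simp
  have hmemd : Memℓp d 2 := by
    apply memℓp_gen
    refine hsumR.congr fun q => ?_
    have h2 : (2 : ENNReal).toReal = (2 : ℝ) := by norm_num
    rw [h2, Real.rpow_two, hnormd]
  let dlp : lp (fun _ : ℕ => ℂ) 2 := ⟨d, hmemd⟩
  have hfam := hon.orthogonalFamily
  have halpha : alphaDA k r n ε t = hfam.linearIsometry dlp := by
    rw [hfam.linearIsometry_apply]
    rw [alphaDA]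
    refine tsum_congr fun q => ?_
    rw [LinearIsometry.toSpanSingleton_apply]
    show _ = d q • (lp.single 2 ((r + k * q, n) : ℕ × ℕ) 1 : DruryArveson2)
    rw [mono, smul_smul]
  have hnormsq : ‖alphaDA k r n ε t‖ ^ 2 = ∑' q, ‖d q‖ ^ 2 := by
    rw [halpha, (hfam.linearIsometry).norm_map dlp]
    have h0 : (0:ℝ) < (2 : ENNReal).toReal := by norm_num
    have := lp.norm_rpow_eq_tsum h0 dlp
    have h2 : (2 : ENNReal).toReal = (2 : ℝ) := by norm_num
    rw [h2] at this
    simp only [Real.rpow_two] at this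
    rw [← this]
  have part1 : ‖alphaDA k r n ε t‖ ^ 2
      = ∑' q : ℕ, ((r + k * q + n).choose n : ℝ) * ε ^ (2 * q) := by
    rw [hnormsq]
    exact tsum_congr hnormd
  refine ⟨part1, ?_⟩
  -- PART 2
  have hζ0 : ∀ j, ζ j ≠ 0 := fun j => by rw [hζ]; exact Complex.exp_ne_zero _
  have hnormζF : ∀ j, ‖ζ j * (F : ℂ)‖ < 1 := by
    intro j
    rw [norm_mul]
    have h1 : ‖ζ j‖ = 1 := by
      rw [hζ, show (2 : ℂ) * Real.pi * Complex.I * j / k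
          = ((2 * Real.pi * j / k : ℝ) : ℂ) * Complex.I by push_cast; ring]
      exact Complex.norm_exp_ofReal_mul_I _
    rw [h1, one_mul, Complex.norm_real, Real.norm_eq_abs, abs_of_pos hF0]
    exact hF1
  have hj : ∀ j, HasSum (fun p : ℕ => ((p + n).choose n : ℂ) * (ζ j * F) ^ p)
      (1 / (1 - ζ j * F) ^ (n + 1)) := fun j =>
    hasSum_choose_mul_geometric_of_norm_lt_one n (hnormζF j)
  set W : ℂ := ∑ j ∈ Finset.range k, ζ j ^ (-(r:ℤ)) * (1 / (1 - ζ j * (F:ℂ)) ^ (n + 1)) with hW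
  have hgsum : HasSum (fun p : ℕ => ∑ j ∈ Finset.range k,
      ζ j ^ (-(r:ℤ)) * (((p + n).choose n : ℂ) * (ζ j * F) ^ p)) W :=
    hasSum_sum fun j _ => (hj j).mul_left _
  have hroot : ∀ z : ℤ, (∑ j ∈ Finset.range k, ζ j ^ z)
      = if (k:ℤ) ∣ z then (k:ℂ) else 0 := by
    intro z
    set ζ1 : ℂ := Complex.exp (2 * Real.pi * Complex.I / k) with hζ1
    have hprim : IsPrimitiveRoot ζ1 k := Complex.isPrimitiveRoot_exp k (by omega)
    have hζj : ∀ j : ℕ, ζ j = ζ1 ^ j := by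
      intro j
      rw [hζ, hζ1, ← Complex.exp_nat_mul]
      congr 1
      ring
    have hpow : ∀ j : ℕ, (ζ1 ^ j) ^ z = (ζ1 ^ z) ^ j := by
      intro j
      rw [← zpow_natCast ζ1 j, ← zpow_mul, mul_comm, zpow_mul, zpow_natCast]
    by_cases hdvd : (k:ℤ) ∣ z
    · have h1 : ζ1 ^ z = 1 := (hprim.zpow_eq_one_iff_dvd z).mpr hdvd
      simp [hζj, hpow, h1, hdvd]
    · have h1 : ζ1 ^ z ≠ 1 := fun h => hdvd ((hprim.zpow_eq_one_iff_dvd z).mp h)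
      simp only [hζj, hpow]
      rw [geom_sum_eq h1]
      have h2 : (ζ1 ^ z) ^ k = 1 := by
        rw [← zpow_natCast (ζ1 ^ z) k, ← zpow_mul, mul_comm, zpow_mul, zpow_natCast,
          hprim.pow_eq_one, one_zpow]
      rw [h2]
      simp [hdvd]
  have hfun : ∀ p : ℕ, (∑ j ∈ Finset.range k,
      ζ j ^ (-(r:ℤ)) * (((p + n).choose n : ℂ) * (ζ j * F) ^ p))
      = ((p + n).choose n : ℂ) * (F:ℂ) ^ p * (if (k:ℤ) ∣ ((p:ℤ) - r) then (k:ℂ) else 0) := by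
    intro p
    rw [← hroot ((p:ℤ) - r), Finset.mul_sum]
    refine Finset.sum_congr rfl fun j _ => ?_
    rw [mul_pow]
    have hz : ζ j ^ ((p:ℤ) - r) = ζ j ^ (-(r:ℤ)) * ζ j ^ (p:ℤ) := by
      rw [← zpow_add₀ (hζ0 j)]
      congr 1
      ring
    rw [hz, zpow_natCast]
    ring
  have hgW : HasSum (fun p : ℕ => ((p + n).choose n : ℂ) * (F:ℂ) ^ p *
      (if (k:ℤ) ∣ ((p:ℤ) - r) then (k:ℂ) else 0)) W := (funext hfun) ▸ hgsum
  have hvan : ∀ p : ℕ, p ∉ Set.range (fun q : ℕ => r + k * q) →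
      (((p + n).choose n : ℂ) * (F:ℂ) ^ p *
        (if (k:ℤ) ∣ ((p:ℤ) - r) then (k:ℂ) else 0)) = 0 := by
    intro p hp
    rw [if_neg, mul_zero]
    rintro ⟨cq, hcq⟩
    have hc0 : 0 ≤ cq := by
      by_contra hcl
      push_neg at hcl
      have h1 : cq ≤ -1 := by omega
      have h2 : (k:ℤ) * cq ≤ (k:ℤ) * (-1) :=
        mul_le_mul_of_nonneg_left h1 (by positivity)
      have h3 : (r:ℤ) ≤ (k:ℤ) - 1 := by omega
      have h4 : (0:ℤ) ≤ (p:ℤ) := Int.natCast_nonneg p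
      linarith
    lift cq to ℕ using hc0 with q0
    refine hp ⟨q0, ?_⟩
    have h5 : ((r + k * q0 : ℕ) : ℤ) = (p:ℤ) := by push_cast; linarith [hcq]
    exact_mod_cast h5
  have hcomp : HasSum ((fun p : ℕ => ((p + n).choose n : ℂ) * (F:ℂ) ^ p *
      (if (k:ℤ) ∣ ((p:ℤ) - r) then (k:ℂ) else 0)) ∘ (fun q : ℕ => r + k * q)) W :=
    (injm.hasSum_iff hvan).mpr hgW
  have hcomp2 : HasSum (fun q : ℕ => ((r + k * q + n).choose n : ℂ) * ((ε:ℂ)^2) ^ q)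
      (W / ((k:ℂ) * (F:ℂ) ^ r)) := by
    have h4 := hcomp.div_const ((k:ℂ) * (F:ℂ) ^ r)
    have he : (fun q : ℕ => (((fun p : ℕ => ((p + n).choose n : ℂ) * (F:ℂ) ^ p *
        (if (k:ℤ) ∣ ((p:ℤ) - r) then (k:ℂ) else 0)) ∘ (fun q : ℕ => r + k * q)) q)
          / ((k:ℂ) * (F:ℂ) ^ r))
        = fun q : ℕ => ((r + k * q + n).choose n : ℂ) * ((ε:ℂ)^2) ^ q := by
      funext q
      simp only [Function.comp_apply]
      rw [if_pos (show (k:ℤ) ∣ (((r + k * q : ℕ):ℤ) - r) from ⟨q, by push_cast; ring⟩)]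
      rw [pow_add, pow_mul, hFkC]
      field_simp
    exact he ▸ h4
  have hco : ((∑' q : ℕ, ((r + k * q + n).choose n : ℝ) * ε ^ (2 * q) : ℝ) : ℂ)
      = ∑' q : ℕ, ((((r + k * q + n).choose n : ℝ) * ε ^ (2 * q) : ℝ) : ℂ) :=
    Complex.ofRealCLM.map_tsum hsumR
  have hcast : ∀ q : ℕ, ((((r + k * q + n).choose n : ℝ) * ε ^ (2 * q) : ℝ) : ℂ)
      = ((r + k * q + n).choose n : ℂ) * ((ε:ℂ)^2) ^ q := by
    intro q
    push_cast
    rw [pow_mul]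
  have htsum : ((∑' q : ℕ, ((r + k * q + n).choose n : ℝ) * ε ^ (2 * q) : ℝ) : ℂ)
      = W / ((k:ℂ) * (F:ℂ) ^ r) := by
    rw [hco, tsum_congr hcast]
    exact hcomp2.tsum_eq
  rw [htsum]
  have hWa : (∑ j ∈ Finset.range k, ζ j ^ (-(r:ℤ)) * a j ^ (-((n:ℤ) + 1))) = W := by
    rw [hW]
    refine Finset.sum_congr rfl fun j _ => ?_
    congr 1
    rw [ha, show (-((n:ℤ) + 1)) = -(((n + 1 : ℕ)) : ℤ) by push_cast; ring, zpow_neg,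
      zpow_natCast, one_div]
  rw [hWa, zpow_neg, zpow_natCast, div_eq_mul_inv, mul_inv]
  ring

end
end

section
/- With f_{r,n} := (∑_q C(r+kq+n,n) q ε^{2q})/(∑_q C(r+kq+n,n) ε^{2q}) and F := ε^{2/k}, the difference f_{r,n} − f_{r,n-1} converges to F/(k(1−F)) as n → ∞, for every 0 ≤ r ≤ k-1. -/
/-!
Write `S n = ∑_q C(r+kq+n, n) ε^{2q}`. Since `(m+1) C(m, n) = (n+1) C(m+1, n+1)`, the numerator
of `f_{r,n}` is `((n+1) S (n+1) - (r+n+1) S n) / k`, so `k f_{r,n} = (n+1) S (n+1) / S n - (r+n+1)`.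

As `F^k = ε²`, `k F^r S n` is the part of `∑_m C(m+n, n) F^m = (1-F)^{-(n+1)}` supported on
`m ≡ r (mod k)`. A roots-of-unity filter (with `ζ^{j(k-r)} = ζ^{-jr}`) writes it as
`∑_j ζ^{-jr} (1 - ζ^j F)^{-(n+1)}`, and `‖1 - ζ^j F‖ > 1 - F` for `ζ^j ≠ 1`, so
`S n = c b^n (1 + O(ρ^n))` with `b = 1/(1-F)` and `ρ < 1`. An error `o(1/n)` in this asymptotic
already forces `(n+2) S (n+2) / S (n+1) - (n+1) S (n+1) / S n → b`, whence the limit `(b-1)/k`.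
-/

open Filter

noncomputable section

/-- The frequency `f_{r,n} = (∑_q C(r+kq+n,n) q ε^{2q}) / (∑_q C(r+kq+n,n) ε^{2q})`. -/
def freq (k : ℕ) (ε : ℝ) (r n : ℕ) : ℝ :=
  (∑' q : ℕ, ((r + k * q + n).choose n : ℝ) * (q : ℝ) * ε ^ (2 * q)) /
    (∑' q : ℕ, ((r + k * q + n).choose n : ℝ) * ε ^ (2 * q))

open Topology Finset

theorem IsPrimitiveRoot.sum_pow_mul_eq_ite {K : Type*} [Field K] {ζ : K} {k : ℕ}
    (hζ : IsPrimitiveRoot ζ k) (t : ℕ) :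
    ∑ j ∈ range k, ζ ^ (j * t) = if k ∣ t then (k : K) else 0 := by
  simp_rw [mul_comm _ t, pow_mul]
  split_ifs with ht
  · simp [(hζ.pow_eq_one_iff_dvd t).2 ht]
  · have hne : ζ ^ t ≠ 1 := fun h => ht ((hζ.pow_eq_one_iff_dvd t).1 h)
    rw [geom_sum_eq hne, ← pow_mul, mul_comm, pow_mul, hζ.pow_eq_one, one_pow, sub_self,
      zero_div]

theorem Nat.dvd_add_sub_iff_mem_range {k r : ℕ} (hr : r < k) (m : ℕ) :
    k ∣ m + (k - r) ↔ m ∈ Set.range (fun q => r + k * q) := by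
  constructor
  · rintro ⟨_ | q, hq⟩
    · omega
    · exact ⟨q, show r + k * q = m by rw [Nat.mul_succ] at hq; omega⟩
  · rintro ⟨q, rfl⟩
    exact ⟨q + 1, show r + k * q + (k - r) = k * (q + 1) by rw [Nat.mul_succ]; omega⟩

theorem hasSum_residueClass_of_isPrimitiveRoot {K : Type*} [Field K] [TopologicalSpace K]
    [IsTopologicalRing K] {ζ : K} {k r : ℕ} (hζ : IsPrimitiveRoot ζ k) (hr : r < k)
    {a : ℕ → K} {x : K} {f : ℕ → K}
    (hf : ∀ j < k, HasSum (fun m => a m * (ζ ^ j * x) ^ m) (f j)) :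
    HasSum (fun q => (k : K) * a (r + k * q) * x ^ (r + k * q))
      (∑ j ∈ range k, ζ ^ (j * (k - r)) * f j) := by
  have hsum : HasSum (fun m => (if k ∣ m + (k - r) then (k : K) else 0) * a m * x ^ m)
      (∑ j ∈ range k, ζ ^ (j * (k - r)) * f j) := by
    refine (hasSum_sum fun j hj => (hf j (mem_range.1 hj)).mul_left (ζ ^ (j * (k - r)))).congr_fun
      fun m => ?_
    rw [← hζ.sum_pow_mul_eq_ite, sum_mul, sum_mul]
    refine sum_congr rfl fun j _ => ?_
    rw [mul_pow, ← pow_mul, mul_add, pow_add]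
    ring
  have hinj : Function.Injective (fun q => r + k * q) := fun p q h =>
    Nat.eq_of_mul_eq_mul_left (by omega) (Nat.add_left_cancel h)
  refine ((hinj.hasSum_iff fun m hm => ?_).2 hsum).congr_fun fun q => ?_
  · rw [if_neg ((Nat.dvd_add_sub_iff_mem_range hr m).not.2 hm), zero_mul, zero_mul]
  · simp only [Function.comp_apply, if_pos ((Nat.dvd_add_sub_iff_mem_range hr _).2 ⟨q, rfl⟩)]

theorem Complex.one_sub_lt_norm_one_sub_mul_s11 {z : ℂ} (hz : ‖z‖ = 1) (hz1 : z ≠ 1) {y : ℝ}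
    (hy : 0 < y) : 1 - y < ‖1 - z * y‖ := by
  have hre : z.re < 1 := by
    refine lt_of_le_of_ne ((le_abs_self _).trans ((abs_re_le_norm z).trans hz.le)) fun h => hz1 ?_
    have him : z.im = 0 := abs_re_eq_norm.1 (by rw [h, hz, abs_one])
    exact Complex.ext (by simpa using h) (by simpa using him)
  calc 1 - y < 1 - z.re * y := by nlinarith
    _ = (1 - z * y).re := by simp
    _ ≤ ‖1 - z * y‖ := re_le_norm _

theorem RCLike.tendsto_natCast_mul_pow_of_norm_lt_one {𝕜 : Type*} [RCLike 𝕜] {w : 𝕜}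
    (hw : ‖w‖ < 1) : Tendsto (fun n : ℕ => (n : 𝕜) * w ^ n) atTop (𝓝 0) := by
  rw [tendsto_zero_iff_norm_tendsto_zero]
  simpa only [norm_mul, norm_pow, RCLike.norm_natCast] using
    tendsto_self_mul_const_pow_of_lt_one (norm_nonneg w) hw

def residueSum (ζ x : ℂ) (k r n : ℕ) : ℂ :=
  ∑ j ∈ range k, ζ ^ (j * (k - r)) / (1 - ζ ^ j * x) ^ (n + 1)

theorem hasSum_choose_mul_pow_residueClass {ζ : ℂ} {k r : ℕ} (hζ : IsPrimitiveRoot ζ k)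
    (hr : r < k) {x : ℂ} (hx : ‖x‖ < 1) (n : ℕ) :
    HasSum (fun q => (k : ℂ) * ((r + k * q + n).choose n : ℂ) * x ^ (r + k * q))
      (residueSum ζ x k r n) := by
  have hζx : ∀ j, ‖ζ ^ j * x‖ < 1 := fun j => by
    rwa [norm_mul, norm_pow, hζ.norm'_eq_one (by omega), one_pow, one_mul]
  simpa only [residueSum, add_right_comm _ n, mul_one_div] using
    hasSum_residueClass_of_isPrimitiveRoot (a := fun m => ((m + n).choose n : ℂ)) (x := x) hζ hr
      fun j _ => hasSum_choose_mul_geometric_of_norm_lt_one n (hζx j)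

theorem tendsto_natCast_mul_residueSum_mul_sub_one {ζ : ℂ} {k r : ℕ} (hk : k ≠ 0)
    (hζ : IsPrimitiveRoot ζ k) {y : ℝ} (hy0 : 0 < y) (hy1 : y < 1) :
    Tendsto (fun n : ℕ => (n : ℂ) * (residueSum ζ y k r n * (1 - y) ^ (n + 1) - 1))
      atTop (𝓝 0) := by
  obtain ⟨k, rfl⟩ := Nat.exists_eq_succ_of_ne_zero hk
  set w : ℕ → ℂ := fun j => (1 - y) / (1 - ζ ^ (j + 1) * y)
  have hw : ∀ j < k, ‖w j‖ < 1 := by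
    intro j hj
    have hlt := Complex.one_sub_lt_norm_one_sub_mul_s11
      (by rw [norm_pow, hζ.norm'_eq_one hk, one_pow])
      (hζ.pow_ne_one_of_pos_of_lt j.succ_ne_zero (by omega)) hy0
    rw [norm_div, div_lt_one (by linarith), ← Complex.ofReal_one, ← Complex.ofReal_sub,
      Complex.norm_real, Real.norm_of_nonneg (by linarith)]
    exact hlt
  have hexpand : ∀ n : ℕ, (n : ℂ) * (residueSum ζ y (k + 1) r n * (1 - y) ^ (n + 1) - 1)
      = ∑ j ∈ range k, ζ ^ ((j + 1) * (k + 1 - r)) * w j * ((n : ℂ) * w j ^ n) := by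
    intro n
    have h1y : (1 : ℂ) - y ≠ 0 := by exact_mod_cast (sub_pos.2 hy1).ne'
    have hfirst : ζ ^ (0 * (k + 1 - r)) / (1 - ζ ^ 0 * y) ^ (n + 1) * (1 - y) ^ (n + 1) = 1 := by
      simp [h1y]
    rw [residueSum, sum_range_succ', add_mul, hfirst, add_sub_cancel_right, sum_mul, mul_sum]
    refine sum_congr rfl fun j _ => ?_
    rw [mul_assoc, mul_left_comm (w j), ← pow_succ', div_pow]
    ring
  simp_rw [hexpand]
  simpa using tendsto_finsetSum (range k) fun j hj =>
    (RCLike.tendsto_natCast_mul_pow_of_norm_lt_one (hw j (mem_range.1 hj))).const_mul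
      (ζ ^ ((j + 1) * (k + 1 - r)) * w j)

theorem hasSum_choose_mul_pow_residueClass_re {ζ : ℂ} {k r : ℕ} (hζ : IsPrimitiveRoot ζ k)
    (hr : r < k) {y : ℝ} (hy0 : 0 < y) (hy1 : y < 1) (n : ℕ) :
    HasSum (fun q => ((r + k * q + n).choose n : ℝ) * (y ^ k) ^ q)
      ((residueSum ζ y k r n).re / (k * y ^ r)) := by
  have hy : ‖(y : ℂ)‖ < 1 := by rwa [Complex.norm_real, Real.norm_of_nonneg hy0.le]
  have hk : (k : ℝ) ≠ 0 := Nat.cast_ne_zero.2 (by omega)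
  refine ((Complex.hasSum_re (hasSum_choose_mul_pow_residueClass hζ hr hy n)).div_const
    (k * y ^ r)).congr_fun fun q => ?_
  rw [← Complex.ofReal_natCast k, ← Complex.ofReal_natCast, ← Complex.ofReal_pow,
    ← Complex.ofReal_mul, ← Complex.ofReal_mul, Complex.ofReal_re, pow_add, ← pow_mul]
  field_simp

theorem tendsto_natCast_mul_re_residueSum_mul_sub_one {ζ : ℂ} {k r : ℕ} (hk : k ≠ 0)
    (hζ : IsPrimitiveRoot ζ k) {y : ℝ} (hy0 : 0 < y) (hy1 : y < 1) :
    Tendsto (fun n : ℕ => (n : ℝ) * ((residueSum ζ y k r n).re * (1 - y) ^ (n + 1) - 1))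
      atTop (𝓝 0) := by
  refine ((Complex.continuous_re.tendsto 0).comp
    (tendsto_natCast_mul_residueSum_mul_sub_one (r := r) hk hζ hy0 hy1)).congr fun n => ?_
  have h1y : (1 - y : ℂ) ^ (n + 1) = ((1 - y) ^ (n + 1) : ℝ) := by push_cast; rfl
  rw [Function.comp_apply, h1y, ← Complex.ofReal_natCast, Complex.re_ofReal_mul, Complex.sub_re,
    Complex.re_mul_ofReal, Complex.one_re]

theorem freq_eq_of_hasSum {k r : ℕ} (hk : k ≠ 0) {ε : ℝ} {S : ℕ → ℝ}
    (hS : ∀ n, HasSum (fun q : ℕ => ((r + k * q + n).choose n : ℝ) * ε ^ (2 * q)) (S n))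
    (n : ℕ) : freq k ε r n = ((n + 1) * (S (n + 1) / S n) - (r + n + 1)) / k := by
  have hpos : 0 < S n := by
    refine lt_of_lt_of_le ?_ (le_hasSum (hS n) 0 fun q _ => by rw [pow_mul]; positivity)
    simpa using Nat.choose_pos (Nat.le_add_left n r)
  have hnum : HasSum (fun q : ℕ => ((r + k * q + n).choose n : ℝ) * q * ε ^ (2 * q))
      (((n + 1) * S (n + 1) - (r + n + 1) * S n) / k) := by
    have h := (((hS (n + 1)).mul_left ((n : ℝ) + 1)).sub
      ((hS n).mul_left ((r : ℝ) + n + 1))).div_const (k : ℝ)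
    refine h.congr_fun fun q => ?_
    have hc := congrArg (Nat.cast : ℕ → ℝ) (Nat.add_one_mul_choose_eq (r + k * q + n) n)
    push_cast at hc
    rw [← add_assoc, eq_div_iff (Nat.cast_ne_zero.2 hk)]
    linear_combination ε ^ (2 * q) * hc
  rw [freq, (hS n).tsum_eq, hnum.tsum_eq]
  field_simp

theorem tendsto_of_tendsto_natCast_mul_sub {u : ℕ → ℝ} {a : ℝ}
    (hu : Tendsto (fun n : ℕ => (n : ℝ) * (u n - a)) atTop (𝓝 0)) :
    Tendsto u atTop (𝓝 a) := by
  rw [← tendsto_sub_nhds_zero_iff]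
  refine (hu.div_atTop tendsto_natCast_atTop_atTop).congr' ?_
  filter_upwards [eventually_ne_atTop 0] with n hn
  exact mul_div_cancel_left₀ _ (Nat.cast_ne_zero.2 hn)

theorem tendsto_succ_mul_ratio_sub_mul {S u : ℕ → ℝ} {b c : ℝ} (hb : b ≠ 0) (hc : c ≠ 0)
    (hS : ∀ n, S n = c * b ^ n * u n)
    (hu : Tendsto (fun n : ℕ => (n : ℝ) * (u n - 1)) atTop (𝓝 0)) :
    Tendsto (fun n : ℕ => (n + 1) * (S (n + 1) / S n) - b * (n + 1)) atTop (𝓝 0) := by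
  have hu1 : Tendsto u atTop (𝓝 1) := tendsto_of_tendsto_natCast_mul_sub hu
  have hu_succ : Tendsto (fun n : ℕ => ((n : ℝ) + 1) * (u (n + 1) - 1)) atTop (𝓝 0) := by
    simpa [Function.comp_def] using hu.comp (tendsto_add_atTop_nat 1)
  have hlim : Tendsto (fun n : ℕ =>
      b * ((n + 1) * (u (n + 1) - 1) - (n * (u n - 1) + (u n - 1))) / u n)
      atTop (𝓝 (b * (0 - (0 + 0)) / 1)) :=
    ((hu_succ.sub (hu.add (tendsto_sub_nhds_zero_iff.2 hu1))).const_mul b).div hu1 one_ne_zero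
  rw [add_zero, sub_zero, mul_zero, zero_div] at hlim
  refine hlim.congr' ?_
  filter_upwards [hu1.eventually_ne one_ne_zero] with n hn
  rw [hS, hS]
  field_simp
  ring

theorem tendsto_succ_mul_ratio_diff {S u : ℕ → ℝ} {b c : ℝ} (hb : b ≠ 0) (hc : c ≠ 0)
    (hS : ∀ n, S n = c * b ^ n * u n)
    (hu : Tendsto (fun n : ℕ => (n : ℝ) * (u n - 1)) atTop (𝓝 0)) :
    Tendsto (fun n : ℕ => (n + 2) * (S (n + 2) / S (n + 1)) - (n + 1) * (S (n + 1) / S n))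
      atTop (𝓝 b) := by
  have h := tendsto_succ_mul_ratio_sub_mul hb hc hS hu
  have h_succ := h.comp (tendsto_add_atTop_nat 1)
  simpa using ((h_succ.sub h).add_const b).congr fun n => by
    simp only [Function.comp_apply]; push_cast; ring

/-- `f_{r,n} − f_{r,n−1} → F/(k(1−F))` as `n → ∞`, where `F = ε^{2/k}`. -/
theorem statement11 (k : ℕ) (hk : 1 ≤ k) (ε : ℝ) (hε0 : 0 < ε) (hε1 : ε < 1)
    (r : ℕ) (hr : r ≤ k - 1)
    (F : ℝ) (hF : F = ε ^ ((2 : ℝ) / (k : ℝ))) :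
    Tendsto (fun n : ℕ => freq k ε r (n + 1) - freq k ε r n)
      atTop (nhds (F / (k * (1 - F)))) := by
  have hk0 : k ≠ 0 := by omega
  have hF0 : 0 < F := hF ▸ Real.rpow_pos_of_pos hε0 _
  have hF1 : F < 1 := hF ▸ Real.rpow_lt_one hε0.le hε1 (by positivity)
  have h1F : 1 - F ≠ 0 := by linarith
  have hFk : F ^ k = ε ^ 2 := by
    rw [hF, ← Real.rpow_mul_natCast hε0.le, div_mul_cancel₀ _ (Nat.cast_ne_zero.2 hk0)]
    norm_num
  obtain ⟨ζ, hζ⟩ : ∃ ζ : ℂ, IsPrimitiveRoot ζ k :=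
    ⟨_, Complex.isPrimitiveRoot_exp k hk0⟩
  set S : ℕ → ℝ := fun n => (residueSum ζ F k r n).re / (k * F ^ r)
  have hS : ∀ n, HasSum (fun q : ℕ => ((r + k * q + n).choose n : ℝ) * ε ^ (2 * q)) (S n) :=
    fun n => (hasSum_choose_mul_pow_residueClass_re hζ (by omega) hF0 hF1 n).congr_fun
      fun q => by rw [hFk, ← pow_mul]
  have hSu : ∀ n, S n = (k * F ^ r * (1 - F))⁻¹ * (1 - F)⁻¹ ^ n *
      ((residueSum ζ F k r n).re * (1 - F) ^ (n + 1)) := by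
    intro n
    simp only [S, inv_pow]
    field_simp
    ring
  have hlim := ((tendsto_succ_mul_ratio_diff (inv_ne_zero h1F) (by simp [hk0, hF0.ne', h1F]) hSu
    (tendsto_natCast_mul_re_residueSum_mul_sub_one hk0 hζ hF0 hF1)).sub_const 1).div_const
    (k : ℝ)
  convert hlim using 2 with n
  · rw [freq_eq_of_hasSum hk0 hS, freq_eq_of_hasSum hk0 hS]
    push_cast
    ring
  · field_simp
    ring

end
end
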